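/- arXiv:math/0210041 — 2 statements merged into one kernel-verified Lean document; each statement's English description precedes it below -/
import Mathlib

section
/- The function Δ satisfies the Lipschitz condition |Δ(x) − Δ(y)| ≤ 2|x − y| for all x, y ∈ [0,1]. -/
open MeasureTheory

/-- A set `C ⊆ ℝ` is symmetric if it is invariant under some reflection `x ↦ 2c − x`. -/
def IsSymmetricSet (C : Set ℝ) : Prop :=
  ∃ c : ℝ, ∀ x : ℝ, x ∈ C ↔ 2 * c - x ∈ C

/-- `symD A` is the supremum of measures of symmetric measurable subsets of `A`. -/
noncomputable def symD (A : Set ℝ) : ℝ :=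
  sSup {m : ℝ | ∃ C : Set ℝ, C ⊆ A ∧ MeasurableSet C ∧ IsSymmetricSet C ∧
    m = (volume C).toReal}

/-- `Delta ε` is the infimum of `symD A` over measurable `A ⊆ [0,1)` with `λ(A) = ε`. -/
noncomputable def Delta (ε : ℝ) : ℝ :=
  sInf {d : ℝ | ∃ A : Set ℝ, A ⊆ Set.Ico (0:ℝ) 1 ∧ MeasurableSet A ∧
    volume A = ENNReal.ofReal ε ∧ d = symD A}

/-! ### Auxiliary lemmas -/

lemma volume_reflect (c : ℝ) (B : Set ℝ) :
    volume ((fun x : ℝ => 2 * c - x) ⁻¹' B) = volume B := by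
  have h : (fun x : ℝ => 2 * c - x) ⁻¹' B
      = Neg.neg ⁻¹' ((fun x : ℝ => 2 * c + x) ⁻¹' B) := by
    ext x; simp [sub_eq_add_neg]
  rw [h, Measure.measure_preimage_neg, measure_preimage_add]

lemma zero_mem_symD_set (A : Set ℝ) :
    (0 : ℝ) ∈ {m : ℝ | ∃ C : Set ℝ, C ⊆ A ∧ MeasurableSet C ∧ IsSymmetricSet C ∧
      m = (volume C).toReal} :=
  ⟨∅, Set.empty_subset _, MeasurableSet.empty, ⟨0, by simp⟩, by simp⟩

lemma symD_set_bddAbove {A : Set ℝ} (hA : A ⊆ Set.Ico (0:ℝ) 1) :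
    BddAbove {m : ℝ | ∃ C : Set ℝ, C ⊆ A ∧ MeasurableSet C ∧ IsSymmetricSet C ∧
      m = (volume C).toReal} := by
  refine ⟨1, fun m hm => ?_⟩
  obtain ⟨C, hCA, -, -, rfl⟩ := hm
  have h1 : volume C ≤ volume (Set.Ico (0:ℝ) 1) :=
    measure_mono (hCA.trans hA)
  have h2 : volume (Set.Ico (0:ℝ) 1) = 1 := by simp [Real.volume_Ico]
  calc (volume C).toReal ≤ (volume (Set.Ico (0:ℝ) 1)).toReal :=
        ENNReal.toReal_mono (by simp [h2]) h1
    _ = 1 := by simp [h2]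

lemma le_symD {A : Set ℝ} (hA : A ⊆ Set.Ico (0:ℝ) 1) {m : ℝ}
    (hm : m ∈ {m : ℝ | ∃ C : Set ℝ, C ⊆ A ∧ MeasurableSet C ∧ IsSymmetricSet C ∧
      m = (volume C).toReal}) : m ≤ symD A :=
  le_csSup (symD_set_bddAbove hA) hm

lemma symD_nonneg {A : Set ℝ} (hA : A ⊆ Set.Ico (0:ℝ) 1) : 0 ≤ symD A :=
  le_symD hA (zero_mem_symD_set A)

lemma symD_mono {A B : Set ℝ} (hAB : A ⊆ B) (hB : B ⊆ Set.Ico (0:ℝ) 1) :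
    symD A ≤ symD B := by
  apply csSup_le_csSup (symD_set_bddAbove hB) ⟨0, zero_mem_symD_set A⟩
  rintro m ⟨C, hCA, hCm, hCs, rfl⟩
  exact ⟨C, hCA.trans hAB, hCm, hCs, rfl⟩

/-- Key estimate: adding a set `B` to `A` can increase `symD` by at most `2 λ(B)`. -/
lemma symD_union_le {A B : Set ℝ} (hA : A ⊆ Set.Ico (0:ℝ) 1)
    (hAB : A ∪ B ⊆ Set.Ico (0:ℝ) 1) (hBm : MeasurableSet B) :
    symD (A ∪ B) ≤ symD A + 2 * (volume B).toReal := by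
  have hBfin : volume B ≠ ⊤ := by
    refine ne_top_of_le_ne_top ?_ (measure_mono ((Set.subset_union_right).trans hAB))
    simp [Real.volume_Ico]
  apply csSup_le ⟨0, zero_mem_symD_set _⟩
  rintro m ⟨C, hCsub, hCm, ⟨c, hc⟩, rfl⟩
  set σ : ℝ → ℝ := fun x => 2 * c - x with hσ
  have hσm : Measurable σ := measurable_const.sub measurable_id
  set C' : Set ℝ := C \ (B ∪ σ ⁻¹' B) with hC'
  have hC'A : C' ⊆ A := by
    rintro x ⟨hxC, hx⟩
    rcases hCsub hxC with h | h
    · exact h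
    · exact absurd (Or.inl h) hx
  have hC'm : MeasurableSet C' := hCm.diff (hBm.union (hσm hBm))
  have hrefl : ∀ z : ℝ, 2 * c - (2 * c - z) = z := fun z => by ring
  have hC'sym : IsSymmetricSet C' := by
    refine ⟨c, fun x => ?_⟩
    simp only [hC', Set.mem_diff, Set.mem_union, Set.mem_preimage, hσ, hrefl]
    rw [← hc x]
    tauto
  have hC'fin : volume C' ≠ ⊤ := by
    refine ne_top_of_le_ne_top ?_ (measure_mono (hC'A.trans hA))
    simp [Real.volume_Ico]
  have hcover : C ⊆ C' ∪ (B ∪ σ ⁻¹' B) := by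
    intro x hx
    by_cases h : x ∈ B ∪ σ ⁻¹' B
    · exact Or.inr h
    · exact Or.inl ⟨hx, h⟩
  have hvol : volume C ≤ volume C' + (volume B + volume B) := by
    calc volume C ≤ volume (C' ∪ (B ∪ σ ⁻¹' B)) := measure_mono hcover
      _ ≤ volume C' + volume (B ∪ σ ⁻¹' B) := measure_union_le _ _
      _ ≤ volume C' + (volume B + volume (σ ⁻¹' B)) := by
          gcongr; exact measure_union_le _ _
      _ = volume C' + (volume B + volume B) := by rw [volume_reflect]
  have htr : (volume C).toReal ≤ (volume C').toReal + 2 * (volume B).toReal := by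
    have hfin : volume C' + (volume B + volume B) ≠ ⊤ := by
      simp [ENNReal.add_ne_top, hC'fin, hBfin]
    have := ENNReal.toReal_mono hfin hvol
    rw [ENNReal.toReal_add hC'fin (by simp [ENNReal.add_ne_top, hBfin]),
      ENNReal.toReal_add hBfin hBfin] at this
    linarith
  have hmem : (volume C').toReal ≤ symD A :=
    le_symD hA ⟨C', hC'A, hC'm, hC'sym, rfl⟩
  linarith

/-- Intermediate-value construction of a subset of prescribed measure. -/
lemma exists_subset_volume_eq {A : Set ℝ} (hA : MeasurableSet A)
    (hsub : A ⊆ Set.Ico (0:ℝ) 1) {r : ℝ} (hr : 0 ≤ r)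
    (hr' : ENNReal.ofReal r ≤ volume A) :
    ∃ B : Set ℝ, B ⊆ A ∧ MeasurableSet B ∧ volume B = ENNReal.ofReal r := by
  have hfin : volume A ≠ ⊤ := by
    refine ne_top_of_le_ne_top ?_ (measure_mono hsub)
    simp [Real.volume_Ico]
  set f : ℝ → ℝ := fun t => (volume (A ∩ Set.Iic t)).toReal with hf
  have hfin' : ∀ t : ℝ, volume (A ∩ Set.Iic t) ≠ ⊤ := fun t =>
    ne_top_of_le_ne_top hfin (measure_mono Set.inter_subset_left)
  have hkey : ∀ s t : ℝ, t ≤ s → f t ≤ f s ∧ f s ≤ f t + (s - t) := by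
    intro s t h
    have hst : A ∩ Set.Iic s ⊆ (A ∩ Set.Iic t) ∪ Set.Ioc t s := by
      intro x hx
      rcases le_or_gt x t with h' | h'
      · exact Or.inl ⟨hx.1, h'⟩
      · exact Or.inr ⟨h', hx.2⟩
    have h1 : volume (A ∩ Set.Iic s)
        ≤ volume (A ∩ Set.Iic t) + ENNReal.ofReal (s - t) := by
      calc volume (A ∩ Set.Iic s) ≤ volume ((A ∩ Set.Iic t) ∪ Set.Ioc t s) :=
            measure_mono hst
        _ ≤ volume (A ∩ Set.Iic t) + volume (Set.Ioc t s) := measure_union_le _ _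
        _ = _ := by rw [Real.volume_Ioc]
    have h2 : volume (A ∩ Set.Iic t) ≤ volume (A ∩ Set.Iic s) :=
      measure_mono (Set.inter_subset_inter_right _ (Set.Iic_subset_Iic.2 h))
    refine ⟨ENNReal.toReal_mono (hfin' s) h2, ?_⟩
    have h3 := ENNReal.toReal_mono
      (by simp [ENNReal.add_ne_top, hfin' t]) h1
    rwa [ENNReal.toReal_add (hfin' t) (by simp), ENNReal.toReal_ofReal (by linarith)]
      at h3
  have hcont : Continuous f := by
    have : LipschitzWith 1 f := by
      apply LipschitzWith.of_dist_le_mul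
      intro s t
      rcases le_total t s with h | h
      · obtain ⟨h1, h2⟩ := hkey s t h
        rw [Real.dist_eq, Real.dist_eq, abs_of_nonneg (by linarith),
          abs_of_nonneg (by linarith)]
        simp only [NNReal.coe_one, one_mul]
        linarith
      · obtain ⟨h1, h2⟩ := hkey t s h
        rw [Real.dist_eq, Real.dist_eq, abs_of_nonpos (by linarith),
          abs_of_nonpos (by linarith)]
        simp only [NNReal.coe_one, one_mul]
        linarith
    exact this.continuous
  have hf0 : f 0 = 0 := by
    have h0 : A ∩ Set.Iic 0 ⊆ {(0:ℝ)} := fun x hx =>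
      le_antisymm hx.2 (hsub hx.1).1
    have := measure_mono_null h0 Real.volume_singleton
    simp [hf, this]
  have hf1 : f 1 = (volume A).toReal := by
    have h1 : A ∩ Set.Iic 1 = A :=
      Set.inter_eq_left.2 fun x hx => le_of_lt (hsub hx).2
    simp [hf, h1]
  have hrle : r ≤ f 1 := by
    rw [hf1]
    have := ENNReal.toReal_mono hfin hr'
    rwa [ENNReal.toReal_ofReal hr] at this
  have hmem : r ∈ Set.Icc (f 0) (f 1) := ⟨by rw [hf0]; exact hr, hrle⟩
  obtain ⟨t, -, hft⟩ := intermediate_value_Icc (zero_le_one) hcont.continuousOn hmem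
  refine ⟨A ∩ Set.Iic t, Set.inter_subset_left, hA.inter measurableSet_Iic, ?_⟩
  rw [← ENNReal.ofReal_toReal (hfin' t)]
  exact congrArg ENNReal.ofReal hft

lemma Delta_set_bddBelow (ε : ℝ) :
    BddBelow {d : ℝ | ∃ A : Set ℝ, A ⊆ Set.Ico (0:ℝ) 1 ∧ MeasurableSet A ∧
      volume A = ENNReal.ofReal ε ∧ d = symD A} := by
  refine ⟨0, ?_⟩
  rintro d ⟨A, hA, -, -, rfl⟩
  exact symD_nonneg hA

lemma Delta_set_nonempty {ε : ℝ} (h0 : 0 ≤ ε) (h1 : ε ≤ 1) :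
    Set.Nonempty {d : ℝ | ∃ A : Set ℝ, A ⊆ Set.Ico (0:ℝ) 1 ∧ MeasurableSet A ∧
      volume A = ENNReal.ofReal ε ∧ d = symD A} := by
  refine ⟨symD (Set.Ico 0 ε), Set.Ico 0 ε, ?_, measurableSet_Ico, ?_, rfl⟩
  · exact Set.Ico_subset_Ico le_rfl h1
  · rw [Real.volume_Ico, sub_zero]

lemma Delta_mono {x y : ℝ} (hx0 : 0 ≤ x) (hxy : x ≤ y) (hy1 : y ≤ 1) :
    Delta x ≤ Delta y := by
  apply le_csInf (Delta_set_nonempty (hx0.trans hxy) hy1)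
  rintro d ⟨A, hAsub, hAm, hAvol, rfl⟩
  have hle : ENNReal.ofReal x ≤ volume A := by
    rw [hAvol]; exact ENNReal.ofReal_le_ofReal hxy
  obtain ⟨B, hBA, hBm, hBvol⟩ := exists_subset_volume_eq hAm hAsub hx0 hle
  calc Delta x ≤ symD B :=
        csInf_le (Delta_set_bddBelow x) ⟨B, hBA.trans hAsub, hBm, hBvol, rfl⟩
    _ ≤ symD A := symD_mono hBA hAsub

lemma Delta_le_add {x y : ℝ} (hx0 : 0 ≤ x) (hxy : x ≤ y) (hy1 : y ≤ 1) :
    Delta y ≤ Delta x + 2 * (y - x) := by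
  have key : ∀ d ∈ {d : ℝ | ∃ A : Set ℝ, A ⊆ Set.Ico (0:ℝ) 1 ∧ MeasurableSet A ∧
      volume A = ENNReal.ofReal x ∧ d = symD A}, Delta y - 2 * (y - x) ≤ d := by
    rintro d ⟨A, hAsub, hAm, hAvol, rfl⟩
    set S : Set ℝ := Set.Ico (0:ℝ) 1 \ A with hS
    have hSm : MeasurableSet S := measurableSet_Ico.diff hAm
    have hSsub : S ⊆ Set.Ico (0:ℝ) 1 := Set.diff_subset
    have hSvol : ENNReal.ofReal (y - x) ≤ volume S := by
      have hunion : A ∪ S = Set.Ico (0:ℝ) 1 := by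
        rw [hS, Set.union_diff_cancel' le_rfl hAsub]
      have hdisj : Disjoint A S := Set.disjoint_sdiff_right
      have hsum : volume A + volume S = ENNReal.ofReal 1 := by
        rw [← measure_union hdisj hSm, hunion, Real.volume_Ico, sub_zero]
      have hSfin : volume S ≠ ⊤ := by
        refine ne_top_of_le_ne_top ?_ (measure_mono hSsub)
        simp [Real.volume_Ico]
      have : volume S = ENNReal.ofReal 1 - ENNReal.ofReal x := by
        rw [← hsum, hAvol]
        rw [ENNReal.add_sub_cancel_left (by simp)]
      rw [this, ← ENNReal.ofReal_sub _ hx0]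
      exact ENNReal.ofReal_le_ofReal (by linarith)
    obtain ⟨B, hBS, hBm, hBvol⟩ :=
      exists_subset_volume_eq hSm hSsub (by linarith) hSvol
    set A' : Set ℝ := A ∪ B with hA'
    have hA'sub : A' ⊆ Set.Ico (0:ℝ) 1 :=
      Set.union_subset hAsub (hBS.trans hSsub)
    have hdisj : Disjoint A B :=
      Set.disjoint_sdiff_right.mono_right hBS
    have hA'vol : volume A' = ENNReal.ofReal y := by
      rw [hA', measure_union hdisj hBm, hAvol, hBvol,
        ← ENNReal.ofReal_add hx0 (by linarith)]
      ring_nf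
    have h1 : Delta y ≤ symD A' :=
      csInf_le (Delta_set_bddBelow y) ⟨A', hA'sub, hAm.union hBm, hA'vol, rfl⟩
    have h2 : symD A' ≤ symD A + 2 * (volume B).toReal :=
      symD_union_le hAsub hA'sub hBm
    have h3 : (volume B).toReal = y - x := by
      rw [hBvol, ENNReal.toReal_ofReal (by linarith)]
    rw [h3] at h2
    linarith
  have := le_csInf (Delta_set_nonempty hx0 (hxy.trans hy1)) key
  have hDx : Delta y - 2 * (y - x) ≤ Delta x := this
  linarith

lemma delta_lipschitz_aux {x y : ℝ} (hx0 : 0 ≤ x) (hxy : x ≤ y) (hy1 : y ≤ 1) :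
    |Delta x - Delta y| ≤ 2 * |x - y| := by
  have h1 := Delta_mono hx0 hxy hy1
  have h2 := Delta_le_add hx0 hxy hy1
  rw [abs_of_nonpos (by linarith), abs_of_nonpos (by linarith)]
  linarith

theorem delta_lipschitz (x y : ℝ) (hx0 : 0 ≤ x) (hx1 : x ≤ 1) (hy0 : 0 ≤ y) (hy1 : y ≤ 1) :
    |Delta x - Delta y| ≤ 2 * |x - y| := by
  rcases le_total x y with h | h
  · exact delta_lipschitz_aux hx0 h hy1
  · have := delta_lipschitz_aux hy0 h hx1
    rwa [abs_sub_comm (Delta y), abs_sub_comm y] at this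
end

section
/- Let f be a pdf supported on [−1/4,1/4], and let j be a nonzero integer. Setting M := ‖f∗f‖_∞ (the essential supremum of f∗f, which is at least 1), one has |f̂(j)|² ≤ (M/π)·sin(π/M). -/
open MeasureTheory

/-- The normalized Haar (probability) measure on the unit circle `ℝ/ℤ`. -/
noncomputable def haarT : Measure UnitAddCircle := AddCircle.haarAddCircle

/-- The image of `[−1/4, 1/4]` in `𝕋 = ℝ/ℤ`. -/
def QuarterArc : Set UnitAddCircle :=
  (fun x : ℝ => (x : UnitAddCircle)) '' Set.Icc (-(1/4) : ℝ) (1/4)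

/-- `f` is a pdf supported on `[−1/4,1/4]`: a nonnegative function in `L²(𝕋)` with integral 1
which vanishes a.e. outside the image of `[−1/4,1/4]` in `𝕋`. -/
structure IsPdfQuarter (f : UnitAddCircle → ℝ) : Prop where
  memL2 : MemLp f 2 haarT
  nonneg : ∀ x, 0 ≤ f x
  integral_one : ∫ x, f x ∂haarT = 1
  support : ∀ᵐ x ∂haarT, x ∉ QuarterArc → f x = 0

/-- Convolution on `𝕋` with respect to the Haar probability measure. -/
noncomputable def convT (f g : UnitAddCircle → ℝ) (c : UnitAddCircle) : ℝ :=
  ∫ x, f x * g (c - x) ∂haarT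

/-! The Fourier coefficients of `g = f ∗ f` are `f̂(j)²`, and `g` is a probability density with
`0 ≤ g ≤ M` (so `M ≥ 1`). Rotating `ĝ(j)` onto the positive real axis gives
`|ĝ(j)| = ∫ cos (2π (s - j x)) g(x) dx` for some phase `s`. By the bathtub principle this is at
most its value for the density `M · 1_I`, where `I` is the arc of length `1/M` on which the cosine
exceeds `cos (π/M)`; that value is `(M/π) sin (π/M)`. -/

open Real

theorem mul_le_mul_add_mul_posPart {g h c M : ℝ} (hg0 : 0 ≤ g) (hgM : g ≤ M) :
    h * g ≤ c * g + M * (h - c)⁺ := by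
  have h₁ : (h - c) * g ≤ (h - c)⁺ * g := mul_le_mul_of_nonneg_right (le_posPart _) hg0
  have h₂ : (h - c)⁺ * g ≤ (h - c)⁺ * M := mul_le_mul_of_nonneg_left hgM (posPart_nonneg _)
  linarith

theorem integral_mul_le_bathtub {α : Type*} [MeasurableSpace α] {μ : Measure α} {g h : α → ℝ}
    {c M : ℝ} (hg : Integrable g μ) (hhg : Integrable (fun x => h x * g x) μ)
    (hh : Integrable (fun x => (h x - c)⁺) μ) (hg0 : ∀ᵐ x ∂μ, 0 ≤ g x)
    (hgM : ∀ᵐ x ∂μ, g x ≤ M) :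
    ∫ x, h x * g x ∂μ ≤ c * ∫ x, g x ∂μ + M * ∫ x, (h x - c)⁺ ∂μ := by
  rw [← integral_const_mul, ← integral_const_mul,
    ← integral_add (hg.const_mul c) (hh.const_mul M)]
  refine integral_mono_ae hhg ((hg.const_mul c).add (hh.const_mul M)) ?_
  filter_upwards [hg0, hgM] with x h0 hM using mul_le_mul_add_mul_posPart h0 hM

theorem cos_le_cos_two_pi_mul_of_abs_le {β x : ℝ} (hβ : β ≤ 1 / 2) (hx : |x| ≤ β) :
    cos (2 * π * β) ≤ cos (2 * π * x) := by
  rw [← cos_abs (2 * π * x), abs_mul, abs_of_pos two_pi_pos]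
  exact cos_le_cos_of_nonneg_of_le_pi (by positivity) (by nlinarith [pi_pos])
    (by nlinarith [pi_pos])

theorem cos_two_pi_mul_le_cos {β x : ℝ} (hβ : 0 ≤ β) (hβx : β ≤ x) (hx : x ≤ 1 - β) :
    cos (2 * π * x) ≤ cos (2 * π * β) := by
  rcases le_total x (1 / 2) with hx' | hx'
  · exact cos_le_cos_of_nonneg_of_le_pi (by positivity) (by nlinarith [pi_pos])
      (by nlinarith [pi_pos])
  · rw [← cos_two_pi_sub, ← mul_one_sub]
    exact cos_le_cos_of_nonneg_of_le_pi (by positivity) (by nlinarith [pi_pos])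
      (by nlinarith [pi_pos])

theorem integral_posPart_cos_sub_cos {β : ℝ} (hβ0 : 0 < β) (hβ : β ≤ 1 / 2) :
    ∫ x in -β..1 - β, (cos (2 * π * x) - cos (2 * π * β))⁺ =
      sin (2 * π * β) / π - 2 * β * cos (2 * π * β) := by
  have hint : ∀ a b : ℝ, IntervalIntegrable (fun x => (cos (2 * π * x) - cos (2 * π * β))⁺)
      volume a b := fun a b => (by fun_prop : Continuous _).intervalIntegrable a b
  rw [← intervalIntegral.integral_add_adjacent_intervals (hint _ β) (hint β _)]
  have h_cap : ∫ x in -β..β, (cos (2 * π * x) - cos (2 * π * β))⁺ =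
      ∫ x in -β..β, (cos (2 * π * x) - cos (2 * π * β)) := by
    refine intervalIntegral.integral_congr fun x hx => posPart_eq_self.2 (sub_nonneg.2 ?_)
    rw [Set.uIcc_of_le (by linarith)] at hx
    exact cos_le_cos_two_pi_mul_of_abs_le hβ (abs_le.2 hx)
  have h_rest : ∫ x in β..1 - β, (cos (2 * π * x) - cos (2 * π * β))⁺ = 0 := by
    rw [← intervalIntegral.integral_zero]
    refine intervalIntegral.integral_congr fun x hx => posPart_eq_zero.2 (sub_nonpos.2 ?_)
    rw [Set.uIcc_of_le (by linarith)] at hx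
    exact cos_two_pi_mul_le_cos hβ0.le hx.1 hx.2
  rw [h_cap, h_rest, add_zero, intervalIntegral.integral_sub
    ((by fun_prop : Continuous fun x => cos (2 * π * x)).intervalIntegrable _ _)
    intervalIntegrable_const,
    intervalIntegral.integral_comp_mul_left _ two_pi_pos.ne', integral_cos]
  simp only [mul_neg, sin_neg, intervalIntegral.integral_const, smul_eq_mul]
  field_simp
  ring

instance : IsProbabilityMeasure haarT := by unfold haarT; infer_instance

instance : haarT.IsAddHaarMeasure := by unfold haarT; infer_instance

theorem fourierCoeff_eq_integral_haarT {E : Type*} [NormedAddCommGroup E] [NormedSpace ℂ E]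
    (f : UnitAddCircle → E) (n : ℤ) :
    fourierCoeff f n = ∫ x, fourier (-n) x • f x ∂haarT :=
  rfl

theorem Integrable.fourier_smul {f : UnitAddCircle → ℂ} (hf : Integrable f haarT) (n : ℤ) :
    Integrable (fun x => fourier n x • f x) haarT :=
  hf.bdd_mul (c := 1) (by fun_prop) (ae_of_all _ fun _ => (Circle.norm_coe _).le)

theorem re_fourier_one_coe (x : ℝ) : (fourier 1 (x : UnitAddCircle)).re = cos (2 * π * x) := by
  rw [fourier_coe_apply, ← Complex.exp_ofReal_mul_I_re]
  push_cast
  ring_nf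

theorem integral_comp_zsmul {G E : Type*} [AddCommGroup G] [TopologicalSpace G]
    [IsTopologicalAddGroup G] [CompactSpace G] [MeasurableSpace G] [BorelSpace G]
    [DivisibleBy G ℤ] {μ : Measure G} [μ.IsAddHaarMeasure] [NormedAddCommGroup E]
    [NormedSpace ℝ E] {F : G → E} (hF : AEStronglyMeasurable F μ) {n : ℤ} (hn : n ≠ 0) :
    ∫ x, F (n • x) ∂μ = ∫ x, F x ∂μ := by
  have h_map := (Measure.measurePreserving_zsmul μ hn).map_eq
  rw [← integral_map (by fun_prop) (h_map.symm ▸ hF), h_map]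

theorem integral_posPart_re_fourier_sub_cos {β : ℝ} (hβ0 : 0 < β) (hβ : β ≤ 1 / 2) {n : ℤ}
    (hn : n ≠ 0) (y₀ : UnitAddCircle) :
    ∫ x, ((fourier 1 (n • x + y₀)).re - cos (2 * π * β))⁺ ∂haarT =
      sin (2 * π * β) / π - 2 * β * cos (2 * π * β) := by
  rw [integral_comp_zsmul (F := fun y => ((fourier 1 (y + y₀)).re - cos (2 * π * β))⁺)
      (by fun_prop) hn,
    integral_add_right_eq_self (fun y => ((fourier 1 y).re - cos (2 * π * β))⁺), haarT,
    AddCircle.integral_haarAddCircle, ← UnitAddCircle.intervalIntegral_preimage (-β),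
    neg_add_eq_sub, inv_one, one_smul]
  simp only [re_fourier_one_coe]
  exact integral_posPart_cos_sub_cos hβ0 hβ

theorem exists_norm_fourierCoeff_eq_integral_re {g : UnitAddCircle → ℝ}
    (hg : Integrable g haarT) (j : ℤ) :
    ∃ y₀ : UnitAddCircle, ‖fourierCoeff (fun x => (g x : ℂ)) j‖ =
      ∫ x, (fourier 1 ((-j) • x + y₀)).re * g x ∂haarT := by
  set w := fourierCoeff (fun x => (g x : ℂ)) j
  set y₀ : UnitAddCircle := ((-w.arg / (2 * π) : ℝ) : UnitAddCircle)
  have h_rot : fourier 1 y₀ * w = ‖w‖ := by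
    have : fourier 1 y₀ = Complex.exp (-w.arg * Complex.I) := by
      rw [fourier_coe_apply]
      congr 1
      push_cast
      field_simp
    calc fourier 1 y₀ * w
        = Complex.exp (-w.arg * Complex.I) * (‖w‖ * Complex.exp (w.arg * Complex.I)) := by
          rw [this, Complex.norm_mul_exp_arg_mul_I]
      _ = ‖w‖ := by
          rw [mul_left_comm, ← Complex.exp_add, neg_mul, neg_add_cancel, Complex.exp_zero,
            mul_one]
  have h_shift : ∀ x, fourier 1 ((-j) • x + y₀) = fourier 1 y₀ * fourier (-j) x := fun x => by
    rw [fourier_apply, fourier_apply, fourier_apply, one_smul, one_smul, AddCircle.toCircle_add,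
      Circle.coe_mul, mul_comm]
  refine ⟨y₀, ?_⟩
  rw [← Complex.ofReal_re ‖w‖, ← h_rot, show w = _ from fourierCoeff_eq_integral_haarT _ _,
    ← integral_const_mul, ← RCLike.re_to_complex,
    ← integral_re ((hg.ofReal.fourier_smul (-j)).const_mul _)]
  congr 1 with x
  rw [h_shift, smul_eq_mul, ← mul_assoc, RCLike.re_to_complex, Complex.re_mul_ofReal]

theorem norm_fourierCoeff_le_of_ae_le {g : UnitAddCircle → ℝ} {M : ℝ} (hg : Integrable g haarT)
    (hg0 : ∀ᵐ x ∂haarT, 0 ≤ g x) (hgM : ∀ᵐ x ∂haarT, g x ≤ M) (hg1 : ∫ x, g x ∂haarT = 1)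
    (hM : 1 ≤ M) {j : ℤ} (hj : j ≠ 0) :
    ‖fourierCoeff (fun x => (g x : ℂ)) j‖ ≤ M / π * sin (π / M) := by
  obtain ⟨y₀, h_eq⟩ := exists_norm_fourierCoeff_eq_integral_re hg j
  set h : UnitAddCircle → ℝ := fun x => (fourier 1 ((-j) • x + y₀)).re
  have h_cont : Continuous h := by fun_prop
  have h_int : Integrable (fun x => h x * g x) haarT :=
    hg.bdd_mul (c := 1) h_cont.aestronglyMeasurable (ae_of_all _ fun _ =>
      (Complex.abs_re_le_norm _).trans_eq (Circle.norm_coe _))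
  have hM0 : 0 < M := one_pos.trans_le hM
  have hβ : 2 * π * (1 / (2 * M)) = π / M := by field_simp
  have h_level : ∫ x, (h x - cos (π / M))⁺ ∂haarT = sin (π / M) / π - cos (π / M) / M := by
    have := integral_posPart_re_fourier_sub_cos (β := 1 / (2 * M)) (by positivity)
      (one_div_le_one_div_of_le two_pos (by linarith)) (neg_ne_zero.2 hj) y₀
    rw [hβ] at this
    rw [this]
    ring
  calc ‖fourierCoeff (fun x => (g x : ℂ)) j‖ = ∫ x, h x * g x ∂haarT := h_eq
    _ ≤ cos (π / M) * ∫ x, g x ∂haarT + M * ∫ x, (h x - cos (π / M))⁺ ∂haarT :=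
      integral_mul_le_bathtub hg h_int
        ((by fun_prop : Continuous _).integrable_of_hasCompactSupport (.of_compactSpace _)) hg0 hgM
    _ = M / π * sin (π / M) := by
      rw [hg1, h_level]
      field_simp
      ring

theorem convT_eq_convolution (f g : UnitAddCircle → ℝ) :
    convT f g = convolution f g (ContinuousLinearMap.mul ℝ ℝ) haarT :=
  rfl

theorem integrable_convT {f g : UnitAddCircle → ℝ} (hf : Integrable f haarT)
    (hg : Integrable g haarT) : Integrable (convT f g) haarT := by
  rw [convT_eq_convolution]
  exact hf.integrable_convolution _ hg

theorem integral_convT {f g : UnitAddCircle → ℝ} (hf : Integrable f haarT)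
    (hg : Integrable g haarT) :
    ∫ c, convT f g c ∂haarT = (∫ x, f x ∂haarT) * ∫ x, g x ∂haarT := by
  rw [convT_eq_convolution, integral_convolution _ hf hg]
  rfl

theorem fourierCoeff_convT {f g : UnitAddCircle → ℝ} (hf : Integrable f haarT)
    (hg : Integrable g haarT) (n : ℤ) :
    fourierCoeff (fun c => (convT f g c : ℂ)) n =
      fourierCoeff (fun x => (f x : ℂ)) n * fourierCoeff (fun x => (g x : ℂ)) n := by
  simp only [fourierCoeff_eq_integral_haarT]
  refine (integral_congr_ae (ae_of_all _ fun c => ?_)).trans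
    (integral_convolution (μ := haarT) (ν := haarT) (ContinuousLinearMap.mul ℂ ℂ)
      (hf.ofReal.fourier_smul (-n)) (hg.ofReal.fourier_smul (-n)))
  rw [convolution_def, convT, smul_eq_mul, ← integral_complex_ofReal, ← integral_const_mul]
  congr 1 with x
  have h_split : fourier (-n) c = fourier (-n) x * fourier (-n) (c - x) := by
    rw [fourier_apply, fourier_apply, fourier_apply, ← Circle.coe_mul, ← AddCircle.toCircle_add,
      ← smul_add, add_sub_cancel]
  rw [h_split]
  simp only [ContinuousLinearMap.mul_apply', smul_eq_mul, Complex.ofReal_mul]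
  ring

theorem norm_convT_self_le {f : UnitAddCircle → ℝ} (hf : MemLp f 2 haarT) (c : UnitAddCircle) :
    ‖convT f f c‖ ≤ ∫ x, f x ^ 2 ∂haarT := by
  have hf2 : Integrable (fun x => f x ^ 2) haarT := hf.integrable_sq
  have hf2' : Integrable (fun x => f (c - x) ^ 2) haarT := hf2.comp_sub_left c
  calc ‖convT f f c‖ ≤ ∫ x, (f x ^ 2 + f (c - x) ^ 2) / 2 ∂haarT := by
        refine norm_integral_le_of_norm_le ((hf2.add hf2').div_const 2) (ae_of_all _ fun x => ?_)
        have := two_mul_le_add_sq |f x| |f (c - x)|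
        rw [sq_abs, sq_abs] at this
        rw [norm_mul, Real.norm_eq_abs, Real.norm_eq_abs]
        linarith
    _ = ∫ x, f x ^ 2 ∂haarT := by
        rw [integral_div, integral_add hf2 hf2',
          integral_sub_left_eq_self (fun x => f x ^ 2)]
        ring

theorem ae_norm_convT_self_le_eLpNorm_top {f : UnitAddCircle → ℝ} (hf : MemLp f 2 haarT) :
    ∀ᵐ c ∂haarT, ‖convT f f c‖ ≤ (eLpNorm (convT f f) ⊤ haarT).toReal := by
  have hfi := hf.integrable one_le_two
  have h_meas := (integrable_convT hfi hfi).aestronglyMeasurable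
  have h_top : MemLp (convT f f) ⊤ haarT :=
    memLp_top_of_bound h_meas _ (ae_of_all _ (norm_convT_self_le hf))
  rw [toReal_eLpNorm h_meas]
  exact ae_le_lpNorm_exponent_top h_top

theorem fourierCoeff_sq_bound (f : UnitAddCircle → ℝ) (hf : IsPdfQuarter f)
    (j : ℤ) (hj : j ≠ 0) (M : ℝ) (hM : M = (eLpNorm (convT f f) ⊤ haarT).toReal) :
    1 ≤ M ∧
    ‖fourierCoeff (fun x => (f x : ℂ)) j‖ ^ 2 ≤
      M / Real.pi * Real.sin (Real.pi / M) := by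
  have hfi : Integrable f haarT := hf.memL2.integrable one_le_two
  have hg := integrable_convT hfi hfi
  have hg1 : ∫ c, convT f f c ∂haarT = 1 := by
    rw [integral_convT hfi hfi, hf.integral_one, one_mul]
  have hg0 : ∀ c, 0 ≤ convT f f c := fun c =>
    integral_nonneg fun x => mul_nonneg (hf.nonneg x) (hf.nonneg _)
  have hgM : ∀ᵐ c ∂haarT, convT f f c ≤ M := by
    filter_upwards [ae_norm_convT_self_le_eLpNorm_top hf.memL2] with c hc
    exact hM ▸ (le_abs_self _).trans hc
  have hM1 : 1 ≤ M := calc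
    1 = ∫ c, convT f f c ∂haarT := hg1.symm
    _ ≤ ∫ _, M ∂haarT := integral_mono_ae hg (integrable_const M) hgM
    _ = M := by simp
  refine ⟨hM1, ?_⟩
  rw [← norm_pow, sq, ← fourierCoeff_convT hfi hfi]
  exact norm_fourierCoeff_le_of_ae_le hg (ae_of_all _ hg0) hgM hg1 hM1 hj
end
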